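/- Let f : ℝⁿ → ℝ be C² satisfying the local Hessian Lipschitz condition with constants L₀, L₁ ≥ 0 and radius δ. Let x with g = ∇f(x) ≠ 0, H = ∇²f(x), and suppose s satisfies ‖s‖ ≤ δ, ‖∇f(x+s)‖ > ‖g‖/2, and ‖(H + (σ^{1/2}‖g‖ + μ)I)s + g‖ ≤ κ_θ σ^{1/2}‖g‖‖s‖ with 0 ≤ μ ≤ κ_C σ^{1/2}‖g‖, σ > 0, κ_C ≥ 1, κ_θ ≥ 0. Then ‖s‖ ≥ 1/(σ^{1/2}[(1+κ_θ+κ_C) + √((1+κ_θ+κ_C)² + (L₀/‖g‖ + L₁)/σ)]). -/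

import Mathlib

/-!
Write `g = ∇f(x)`, `t = ‖s‖` and `L = L₀ + L₁‖g‖`. At `x + τ s`, `0 ≤ τ ≤ 1`, the Hessian
differs from `∇²f(x)` by at most `L τ ‖s‖`, so the Taylor remainder of `∇f` is at most
`L t² / 2`. Splitting `∇f(x + s)` into that remainder, the residual of the regularized Newton
system and the regularization term gives `‖g‖ / 2 < L t² / 2 + (1 + κθ + κC) √σ ‖g‖ t`, and the
claimed bound is the positive root of the corresponding quadratic in `t`.
-/

theorem norm_sub_sub_fderiv_le_of_norm_fderiv_sub_le {E F : Type*}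
    [NormedAddCommGroup E] [NormedSpace ℝ E] [NormedAddCommGroup F] [NormedSpace ℝ F]
    {G : E → F} (hG : Differentiable ℝ G) {x s : E} {L : ℝ}
    (hG' : ∀ t ∈ Set.Ico (0 : ℝ) 1, ‖fderiv ℝ G (x + t • s) - fderiv ℝ G x‖ ≤ L * (t * ‖s‖)) :
    ‖G (x + s) - G x - fderiv ℝ G x s‖ ≤ L / 2 * ‖s‖ ^ 2 := by
  let ψ : ℝ → F := fun t => G (x + t • s) - G x - t • fderiv ℝ G x s
  have hψ : ∀ t, HasDerivAt ψ (fderiv ℝ G (x + t • s) s - fderiv ℝ G x s) t := fun t => by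
    have hline : HasDerivAt (fun t : ℝ => x + t • s) s t := by
      simpa using ((hasDerivAt_id t).smul_const s).const_add x
    exact (((hG _).hasFDerivAt.comp_hasDerivAt t hline).sub_const (G x)).sub
      (by simpa using (hasDerivAt_id t).smul_const (fderiv ℝ G x s))
  have hB : ∀ t, HasDerivAt (fun t => L / 2 * ‖s‖ ^ 2 * t ^ 2) (L * ‖s‖ ^ 2 * t) t := fun t =>
    ((hasDerivAt_pow 2 t).const_mul _).congr_deriv (by ring)
  have hbound := image_norm_le_of_norm_deriv_right_le_deriv_boundary
    (fun t _ => (hψ t).continuousAt.continuousWithinAt) (fun t _ => (hψ t).hasDerivWithinAt)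
    (by simp [ψ]) hB (fun t ht => ?_) (Set.right_mem_Icc.2 zero_le_one)
  · simpa [ψ] using hbound
  calc ‖fderiv ℝ G (x + t • s) s - fderiv ℝ G x s‖
      = ‖(fderiv ℝ G (x + t • s) - fderiv ℝ G x) s‖ := rfl
    _ ≤ ‖fderiv ℝ G (x + t • s) - fderiv ℝ G x‖ * ‖s‖ := ContinuousLinearMap.le_opNorm _ _
    _ ≤ L * (t * ‖s‖) * ‖s‖ := by gcongr; exact hG' t ht
    _ = L * ‖s‖ ^ 2 * t := by ring

theorem ContDiff.differentiable_gradient {E : Type*} [NormedAddCommGroup E]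
    [InnerProductSpace ℝ E] [CompleteSpace E] {f : E → ℝ} {n : WithTop ℕ∞} (hf : ContDiff ℝ n f)
    (hn : 2 ≤ n) : Differentiable ℝ (gradient f) :=
  (InnerProductSpace.toDual ℝ E).symm.differentiable.comp
    ((hf.fderiv_right (m := 1) hn).differentiable one_ne_zero)

theorem norm_le_of_norm_sub_sub_le_of_norm_add_smul_add_le {E : Type*} [NormedAddCommGroup E]
    [NormedSpace ℝ E] {g v y s : E} {lam R ε : ℝ} (hlam : 0 ≤ lam)
    (hrem : ‖y - g - v‖ ≤ R) (hres : ‖v + lam • s + g‖ ≤ ε) :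
    ‖y‖ ≤ R + ε + lam * ‖s‖ := by
  calc ‖y‖ = ‖(y - g - v) + (v + lam • s + g) - lam • s‖ := by congr 1; abel
    _ ≤ ‖y - g - v‖ + ‖v + lam • s + g‖ + ‖lam • s‖ := norm_sub_le_of_le (norm_add_le _ _) le_rfl
    _ ≤ R + ε + lam * ‖s‖ := by
      rw [norm_smul, Real.norm_of_nonneg hlam]; gcongr

theorem one_div_add_sqrt_lt {b q t : ℝ} (ht : 0 ≤ t) (h : 1 < q * t ^ 2 + 2 * b * t) :
    1 / (b + √(b ^ 2 + q)) < t := by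
  have htpos : 0 < t := ht.lt_of_ne (by rintro rfl; norm_num at h)
  rcases le_or_gt (b + √(b ^ 2 + q)) 0 with hr | hr
  · exact (one_div_nonpos.2 hr).trans_lt htpos
  rw [div_lt_iff₀ hr]
  by_contra! hle
  rcases le_or_gt 0 (b ^ 2 + q) with hd | hd
  · -- `1 - q t² - 2 b t = (1 - (b + w) t) (1 + (w - b) t)` with `w = √(b² + q)`
    have hw := Real.sq_sqrt hd
    have hw0 := Real.sqrt_nonneg (b ^ 2 + q)
    nlinarith [mul_nonneg (sub_nonneg.2 hle)
      (add_nonneg (sub_nonneg.2 hle) (mul_nonneg (mul_nonneg zero_le_two hw0) ht))]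
  · rw [Real.sqrt_eq_zero_of_nonpos hd.le, add_zero] at hle
    nlinarith [sq_nonneg (1 - t * b), mul_pos htpos htpos]

theorem stmt_7_general {n : ℕ} (f : EuclideanSpace ℝ (Fin n) → ℝ)
    (hf : ContDiff ℝ 2 f) (L₀ L₁ δ : ℝ)
    (hLip : ∀ x y : EuclideanSpace ℝ (Fin n), ‖x - y‖ ≤ δ →
      ‖fderiv ℝ (gradient f) y - fderiv ℝ (gradient f) x‖
        ≤ (L₀ + L₁ * ‖gradient f x‖) * ‖x - y‖)
    (x s : EuclideanSpace ℝ (Fin n)) (σ μ κC κθ : ℝ)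
    (hσ : 0 < σ)
    (hμ0 : 0 ≤ μ) (hμ : μ ≤ κC * Real.sqrt σ * ‖gradient f x‖)
    (hg : gradient f x ≠ 0)
    (hsδ : ‖s‖ ≤ δ)
    (hbig : ‖gradient f (x + s)‖ > ‖gradient f x‖ / 2)
    (hres : ‖fderiv ℝ (gradient f) x s
        + (Real.sqrt σ * ‖gradient f x‖ + μ) • s + gradient f x‖
        ≤ κθ * Real.sqrt σ * ‖gradient f x‖ * ‖s‖) :
    ‖s‖ ≥ 1 / (Real.sqrt σ * ((1 + κθ + κC)
        + Real.sqrt ((1 + κθ + κC) ^ 2 + (L₀ / ‖gradient f x‖ + L₁) / σ))) := by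
  set g := ‖gradient f x‖
  set L := L₀ + L₁ * g
  set B := 1 + κθ + κC
  have hg0 : 0 < g := norm_pos_iff.mpr hg
  have hrem : ‖gradient f (x + s) - gradient f x - fderiv ℝ (gradient f) x s‖ ≤ L / 2 * ‖s‖ ^ 2 := by
    refine norm_sub_sub_fderiv_le_of_norm_fderiv_sub_le
      (hf.differentiable_gradient le_rfl) fun t ht => ?_
    have hxt : ‖x - (x + t • s)‖ = t * ‖s‖ := by
      rw [sub_add_cancel_left, norm_neg, norm_smul, Real.norm_of_nonneg ht.1]
    exact hxt ▸ hLip x (x + t • s) (hxt ▸ (mul_le_of_le_one_left (norm_nonneg s) ht.2.le).trans hsδ)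
  have hnorm := norm_le_of_norm_sub_sub_le_of_norm_add_smul_add_le (by positivity) hrem hres
  have hgrowth : g / 2 < L / 2 * ‖s‖ ^ 2 + B * √σ * g * ‖s‖ := by
    have hμs := mul_le_mul_of_nonneg_right hμ (norm_nonneg s)
    linear_combination hbig + hnorm + hμs
  have hquad : 1 < L / g * ‖s‖ ^ 2 + 2 * (B * √σ) * ‖s‖ := by
    rw [← mul_lt_mul_iff_of_pos_left (half_pos hg0)]
    field_simp
    linarith
  have hroot : √((B * √σ) ^ 2 + L / g) = √σ * √(B ^ 2 + (L₀ / g + L₁) / σ) := by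
    rw [← Real.sqrt_mul hσ.le]
    congr 1
    field_simp
    rw [Real.sq_sqrt hσ.le]
    ring
  have hlt := one_div_add_sqrt_lt (norm_nonneg s) hquad
  rw [hroot, mul_comm B, ← mul_add] at hlt
  exact hlt.le

/-- Lower bound on the length of a Newton trial step whose gradient did not
decrease by a factor of two. -/
theorem stmt_7 {n : ℕ} (f : EuclideanSpace ℝ (Fin n) → ℝ)
    (hf : ContDiff ℝ 2 f) (L₀ L₁ δ : ℝ) (hL₀ : 0 ≤ L₀) (hL₁ : 0 ≤ L₁) (hδ : 0 < δ)
    (hLip : ∀ x y : EuclideanSpace ℝ (Fin n), ‖x - y‖ ≤ δ →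
      ‖fderiv ℝ (gradient f) y - fderiv ℝ (gradient f) x‖
        ≤ (L₀ + L₁ * ‖gradient f x‖) * ‖x - y‖)
    (x s : EuclideanSpace ℝ (Fin n)) (σ μ κC κθ : ℝ)
    (hσ : 0 < σ) (hκC : 1 ≤ κC) (hκθ : 0 ≤ κθ)
    (hμ0 : 0 ≤ μ) (hμ : μ ≤ κC * Real.sqrt σ * ‖gradient f x‖)
    (hg : gradient f x ≠ 0)
    (hsδ : ‖s‖ ≤ δ)
    (hbig : ‖gradient f (x + s)‖ > ‖gradient f x‖ / 2)
    (hres : ‖fderiv ℝ (gradient f) x s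
        + (Real.sqrt σ * ‖gradient f x‖ + μ) • s + gradient f x‖
        ≤ κθ * Real.sqrt σ * ‖gradient f x‖ * ‖s‖) :
    ‖s‖ ≥ 1 / (Real.sqrt σ * ((1 + κθ + κC)
        + Real.sqrt ((1 + κθ + κC) ^ 2 + (L₀ / ‖gradient f x‖ + L₁) / σ))) :=
  stmt_7_general f hf L₀ L₁ δ hLip x s σ μ κC κθ hσ hμ0 hμ hg hsδ hbig hres
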